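/- Suppose positive real-valued differentiable functions P_1, ..., P_n : ℝ → ℝ satisfy the Lotka–Volterra equations dP_i/dt = f_i(P_1(t), ..., P_n(t)) · P_i(t), where each fitness function f_i : [0,∞)^n → ℝ is differentiable. Let p_i(t) = P_i(t) / Σ_j P_j(t) and f̄(t) = Σ_j p_j(t) f_j(P_1(t), ..., P_n(t)). Then the mean fitness is differentiable and its time derivative decomposes as d f̄/dt = Var(f) + Σ_{i=1}^n p_i(t) · (d/dt) f_i(P_1(t), ..., P_n(t)), where Var(f) = Σ_j p_j(t)(f_j(P_1(t), ..., P_n(t)) − f̄(t))² is the variance in fitness. -/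

import Mathlib

/-! The shares `p_i = P_i / ∑ P_j` obey the replicator equation `p_i' = p_i (f_i - f̄)`, so the
product rule gives `f̄' = ∑ p_i (f_i - f̄) f_i + ∑ p_i f_i'`. The first sum is the variance
because the deviations `f_i - f̄` have `p`-mean zero. -/

open Finset Filter Topology

section

variable {ι : Type*} [Fintype ι]

theorem orthant_mem_nhds {x : ι → ℝ} (hx : ∀ j, 0 < x j) :
    {y : ι → ℝ | ∀ j, 0 ≤ y j} ∈ 𝓝 x := by
  simpa [Set.pi, Set.mem_Ici] using
    set_pi_mem_nhds Set.finite_univ fun j _ => Ici_mem_nhds (hx j)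

theorem hasDerivAt_div_sum_of_hasDerivAt_mul {P : ι → ℝ → ℝ} {g : ι → ℝ} {t : ℝ}
    (hpos : ∀ j, 0 < P j t) (hP : ∀ j, HasDerivAt (P j) (g j * P j t) t) (i : ι) :
    HasDerivAt (fun s => P i s / ∑ j, P j s)
      (P i t / (∑ j, P j t) * (g i - ∑ j, P j t / (∑ k, P k t) * g j)) t := by
  have hS : 0 < ∑ j, P j t :=
    (hpos i).trans_le (single_le_sum (fun j _ => (hpos j).le) (mem_univ i))
  refine ((hP i).div (HasDerivAt.fun_sum fun j _ => hP j) hS.ne').congr_deriv ?_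
  simp only [div_mul_eq_mul_div, ← sum_div]
  field_simp
  simp only [mul_comm (g _)]

/-- No hypothesis on `∑ P` is needed: when it vanishes, all shares are `0` by `x / 0 = 0`. -/
theorem sum_div_sum_mul_sub_weighted_mean (P x : ι → ℝ) :
    ∑ j, P j / (∑ k, P k) * (x j - ∑ k, P k / (∑ l, P l) * x k) = 0 := by
  by_cases hS : ∑ k, P k = 0
  · simp [hS]
  · simp only [mul_sub, sum_sub_distrib, ← sum_mul, ← sum_div, div_self hS, one_mul, sub_self]

theorem sum_mul_sub_mul_eq_sum_mul_sub_sq {R : Type*} [CommRing R] {w x : ι → R} {m : R}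
    (h : ∑ j, w j * (x j - m) = 0) :
    ∑ j, w j * (x j - m) * x j = ∑ j, w j * (x j - m) ^ 2 := by
  calc ∑ j, w j * (x j - m) * x j
      = ∑ j, w j * (x j - m) ^ 2 + m * ∑ j, w j * (x j - m) := by
        rw [mul_sum, ← sum_add_distrib]
        exact sum_congr rfl fun j _ => by ring
    _ = ∑ j, w j * (x j - m) ^ 2 := by rw [h, mul_zero, add_zero]

end

theorem deriv_mean_fitness_decomposition_general
    (n : ℕ) (P : Fin n → ℝ → ℝ) (f : Fin n → (Fin n → ℝ) → ℝ)
    (hpos : ∀ i t, 0 < P i t)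
    (hfdiff : ∀ i, DifferentiableOn ℝ (f i) {x : Fin n → ℝ | ∀ j, 0 ≤ x j})
    (hLV : ∀ i t, HasDerivAt (P i) (f i (fun j => P j t) * P i t) t)
    (p : Fin n → ℝ → ℝ)
    (hp : ∀ i t, p i t = P i t / ∑ j, P j t)
    (fbar : ℝ → ℝ)
    (hfbar : ∀ t, fbar t = ∑ j, p j t * f j (fun k => P k t))
    (t : ℝ) :
    HasDerivAt fbar
      ((∑ j, p j t * (f j (fun k => P k t) - fbar t) ^ 2)
        + ∑ i, p i t * deriv (fun s => f i (fun k => P k s)) t) t := by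
  have hfitness : ∀ i, HasDerivAt (fun s => f i fun k => P k s)
      (deriv (fun s => f i fun k => P k s) t) t := fun i =>
    (((hfdiff i).differentiableAt (orthant_mem_nhds (hpos · t))).comp t
      (differentiableAt_pi.mpr fun k => (hLV k t).differentiableAt)).hasDerivAt
  have hshare : ∀ i, HasDerivAt (p i)
      (p i t * (f i (fun k => P k t) - fbar t)) t := fun i => by
    rw [funext (hp i)]
    simpa only [hp, hfbar] using
      hasDerivAt_div_sum_of_hasDerivAt_mul (hpos · t) (hLV · t) i
  have hcentered : ∑ j, p j t * (f j (fun k => P k t) - fbar t) = 0 := by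
    simpa only [hp, hfbar] using
      sum_div_sum_mul_sub_weighted_mean (P · t) (fun j => f j fun k => P k t)
  refine ((HasDerivAt.fun_sum fun j _ => (hshare j).mul (hfitness j)).congr_of_eventuallyEq
    (Eventually.of_forall hfbar)).congr_deriv ?_
  rw [sum_add_distrib, sum_mul_sub_mul_eq_sum_mul_sub_sq hcentered]

/-- **Decomposition of the rate of change of mean fitness.**
If positive differentiable populations `P i` obey the Lotka–Volterra equations
with differentiable fitness functions `f i`, then the mean fitness
`f̄ = ∑ j, p j * f j (P t)` is differentiable and its time derivative equals
the variance in fitness plus `∑ i, p i t * (d/dt) f i (P t)`. -/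
theorem deriv_mean_fitness_decomposition
    (n : ℕ) (P : Fin n → ℝ → ℝ) (f : Fin n → (Fin n → ℝ) → ℝ)
    (hpos : ∀ i t, 0 < P i t)
    (hPdiff : ∀ i, Differentiable ℝ (P i))
    (hfdiff : ∀ i, DifferentiableOn ℝ (f i) {x : Fin n → ℝ | ∀ j, 0 ≤ x j})
    (hLV : ∀ i t, HasDerivAt (P i) (f i (fun j => P j t) * P i t) t)
    (p : Fin n → ℝ → ℝ)
    (hp : ∀ i t, p i t = P i t / ∑ j, P j t)
    (fbar : ℝ → ℝ)
    (hfbar : ∀ t, fbar t = ∑ j, p j t * f j (fun k => P k t))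
    (t : ℝ) :
    HasDerivAt fbar
      ((∑ j, p j t * (f j (fun k => P k t) - fbar t) ^ 2)
        + ∑ i, p i t * deriv (fun s => f i (fun k => P k s)) t) t :=
  deriv_mean_fitness_decomposition_general n P f hpos hfdiff hLV p hp fbar hfbar t
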